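/- The worst-case number of cut-and-paste moves needed to sort a permutation of [n] is at least ⌈(n+1)/3⌉. -/

import Mathlib

/-- A cut-and-paste move: cut out a contiguous substring `M`, optionally
reverse it, and paste it back at any position of the remaining string. -/
def IsMove (l l' : List ℕ) : Prop :=
  ∃ P M S X Y : List ℕ, l = P ++ M ++ S ∧ X ++ Y = P ++ S ∧
    (l' = X ++ M ++ Y ∨ l' = X ++ M.reverse ++ Y)

/-- `MoveSeq k l l'` : `l` can be transformed into `l'` by exactly `k`
cut-and-paste moves. -/
inductive MoveSeq : ℕ → List ℕ → List ℕ → Prop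
  | refl (l : List ℕ) : MoveSeq 0 l l
  | step {k : ℕ} {l l' l'' : List ℕ} :
      IsMove l l' → MoveSeq k l' l'' → MoveSeq (k + 1) l l''

/-- Number of parity adjacencies: consecutive pairs of opposite parity. -/
def parityAdj (l : List ℕ) : ℕ :=
  (l.zip l.tail).countP (fun p => p.1 % 2 != p.2 % 2)

/-- Number of adjacencies: consecutive pairs whose values differ by 1. -/
def adjCount (l : List ℕ) : ℕ :=
  (l.zip l.tail).countP (fun p => (p.1 + 1 == p.2) || (p.2 + 1 == p.1))

def adjp (a b : ℕ) : ℕ := if a + 1 = b ∨ b + 1 = a then 1 else 0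

def jointO : Option ℕ → Option ℕ → ℕ
  | some a, some b => adjp a b
  | _, _ => 0

lemma adjp_le (a b : ℕ) : adjp a b ≤ 1 := by unfold adjp; split <;> omega

lemma jointO_le (x y : Option ℕ) : jointO x y ≤ 1 := by
  cases x <;> cases y <;> simp [jointO, adjp_le]

lemma jointO_comm (x y : Option ℕ) : jointO x y = jointO y x := by
  cases x <;> cases y <;> simp [jointO, adjp, or_comm]

lemma adjCount_nil : adjCount [] = 0 := rfl
lemma adjCount_single (a : ℕ) : adjCount [a] = 0 := rfl

lemma adjCount_cons (a : ℕ) (l : List ℕ) :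
    adjCount (a :: l) = jointO (some a) l.head? + adjCount l := by
  cases l with
  | nil => simp [adjCount, jointO]
  | cons b t =>
    simp only [adjCount, List.zip_cons_cons, List.tail_cons, List.countP_cons, List.head?_cons]
    have : (if ((a + 1 == b) || (b + 1 == a)) = true then 1 else 0) = jointO (some a) (some b) := by
      by_cases h : a + 1 = b ∨ b + 1 = a <;> simp [jointO, adjp, h]
    omega

lemma adjCount_append (A B : List ℕ) :
    adjCount (A ++ B) = adjCount A + adjCount B + jointO A.getLast? B.head? := by
  induction A with
  | nil => simp [adjCount_nil, jointO]
  | cons a A ih =>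
    cases A with
    | nil =>
      simp only [List.nil_append, List.cons_append, List.singleton_append]
      rw [adjCount_cons, adjCount_single]
      simp [jointO_comm]
      omega
    | cons x A' =>
      rw [List.cons_append, adjCount_cons, ih, adjCount_cons a (x :: A')]
      have h1 : ((x :: A') ++ B).head? = some x := rfl
      have h2 : (a :: x :: A').getLast? = (x :: A').getLast? := List.getLast?_cons_cons
      rw [h1, h2, List.head?_cons]
      omega

lemma adjCount_reverse (l : List ℕ) : adjCount l.reverse = adjCount l := by
  induction l with
  | nil => rfl
  | cons a l ih =>
    rw [List.reverse_cons, adjCount_append, ih, List.getLast?_reverse, adjCount_cons a l,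
      adjCount_single, jointO_comm l.head? ([a].head?)]
    simp only [List.head?_cons]
    omega

lemma adjCount_range'1 (a m : ℕ) : adjCount (List.range' a (m + 1)) = m := by
  induction m generalizing a with
  | zero => rfl
  | succ m ih =>
    rw [List.range'_succ, adjCount_cons, ih (a + 1), List.range'_succ, List.head?_cons]
    simp [jointO, adjp]
    omega

lemma adjCount_range'2 (a m : ℕ) : adjCount (List.range' a m 2) = 0 := by
  induction m generalizing a with
  | zero => rfl
  | succ m ih =>
    rw [List.range'_succ, adjCount_cons, ih (a + 2)]
    cases m with
    | zero => rfl
    | succ m =>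
      rw [List.range'_succ, List.head?_cons]
      simp [jointO, adjp]
      omega

lemma adjCount_append_le (A B : List ℕ) :
    adjCount (A ++ B) ≤ adjCount A + adjCount B + 1 := by
  rw [adjCount_append]
  have := jointO_le A.getLast? B.head?
  omega

lemma adjCount_append_ge (A B : List ℕ) :
    adjCount A + adjCount B ≤ adjCount (A ++ B) := by
  rw [adjCount_append]; omega

lemma move_bound {l l' : List ℕ} (h : IsMove l l') (a b : ℕ) :
    adjCount (a :: (l' ++ [b])) ≤ adjCount (a :: (l ++ [b])) + 3 := by
  obtain ⟨P, M, S, X, Y, hl, hxy, hl'⟩ := h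
  have key : ∀ M' : List ℕ, adjCount M' = adjCount M →
      adjCount ((a :: X) ++ (M' ++ (Y ++ [b]))) ≤ adjCount (a :: (l ++ [b])) + 3 := by
    intro M' hM
    have e2 : (a :: X) ++ (Y ++ [b]) = (a :: P) ++ (S ++ [b]) := by
      rw [List.cons_append, List.cons_append, ← List.append_assoc, hxy, List.append_assoc]
    have h1 := adjCount_append_le (a :: X) (M' ++ (Y ++ [b]))
    have h2 := adjCount_append_le M' (Y ++ [b])
    have h3 := adjCount_append_ge (a :: X) (Y ++ [b])
    have h4 := adjCount_append_le (a :: P) (S ++ [b])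
    have h5 := adjCount_append_ge (a :: P) (M ++ (S ++ [b]))
    have h6 := adjCount_append_ge M (S ++ [b])
    have e1 : a :: (l ++ [b]) = (a :: P) ++ (M ++ (S ++ [b])) := by simp [hl]
    rw [e2] at h3
    rw [e1]
    omega
  rcases hl' with hl' | hl'
  · have e : a :: (l' ++ [b]) = (a :: X) ++ (M ++ (Y ++ [b])) := by simp [hl']
    rw [e]; exact key M rfl
  · have e : a :: (l' ++ [b]) = (a :: X) ++ (M.reverse ++ (Y ++ [b])) := by simp [hl']
    rw [e]; exact key M.reverse (adjCount_reverse M)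

lemma moveSeq_bound {k : ℕ} {l l'' : List ℕ} (h : MoveSeq k l l'') (a b : ℕ) :
    adjCount (a :: (l'' ++ [b])) ≤ adjCount (a :: (l ++ [b])) + 3 * k := by
  induction h with
  | refl l => simp
  | step hm hs ih =>
    have := move_bound hm a b
    omega

lemma target_count (n : ℕ) : adjCount (0 :: (List.range' 1 n ++ [n + 1])) = n + 1 := by
  have e : 0 :: (List.range' 1 n ++ [n + 1]) = List.range' 0 (n + 2) := by
    rw [show List.range' 0 (n + 2) = List.range' 0 (n + 1) ++ [0 + 1 * (n + 1)] from
      List.range'_concat, List.range'_succ]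
    simp
  rw [e, adjCount_range'1]

lemma ms_split (n : ℕ) :
    (↑(List.range' 2 (n / 2) 2) + ↑(List.range' 1 ((n + 1) / 2) 2) : Multiset ℕ) =
      ↑(List.range' 1 n) := by
  induction n using Nat.twoStepInduction with
  | zero => rfl
  | one => rfl
  | more n ih _ =>
    have e1 : (n + 2) / 2 = n / 2 + 1 := by omega
    have e2 : (n + 2 + 1) / 2 = (n + 1) / 2 + 1 := by omega
    have e3 : List.range' 1 (n + 2) = (List.range' 1 n ++ [1 + 1 * n]) ++ [1 + 1 * (n + 1)] := by
      rw [← List.range'_concat, ← List.range'_concat]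
    rw [e1, e2, e3, List.range'_concat, List.range'_concat]
    push_cast [← Multiset.coe_add] at *
    rcases Nat.even_or_odd n with ⟨m, rfl⟩ | ⟨m, rfl⟩
    · rw [show (m + m) / 2 = m by omega, show (m + m + 1) / 2 = m by omega] at *
      rw [show 2 + 2 * m = 1 + 1 * (m + m + 1) by omega, show 1 + 2 * m = 1 + 1 * (m + m) by omega,
        ← ih]
      abel
    · rw [show (2 * m + 1) / 2 = m by omega, show (2 * m + 1 + 1) / 2 = m + 1 by omega] at *
      rw [show 2 + 2 * m = 1 + 1 * (2 * m + 1) by omega,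
        show 1 + 2 * (m + 1) = 1 + 1 * (2 * m + 1 + 1) by omega, ← ih]
      abel

lemma adjp_zero {a b : ℕ} (h1 : a + 1 ≠ b) (h2 : b + 1 ≠ a) : adjp a b = 0 := by
  simp [adjp, h1, h2]

lemma adj_zero (n : ℕ) (hn : 5 ≤ n) :
    adjCount (0 :: (((List.range' 2 (n / 2) 2).reverse ++
      (List.range' 1 ((n + 1) / 2) 2).reverse) ++ [n + 1])) = 0 := by
  obtain ⟨m, hm⟩ : ∃ m, n / 2 = m + 1 := ⟨n / 2 - 1, by omega⟩
  obtain ⟨p, hp⟩ : ∃ p, (n + 1) / 2 = p + 1 := ⟨(n + 1) / 2 - 1, by omega⟩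
  have hEh : (List.range' 2 (n / 2) 2).reverse.head? = some (2 + 2 * m) := by
    rw [List.head?_reverse, hm, List.range'_concat, List.getLast?_concat]
  have hEl : (List.range' 2 (n / 2) 2).reverse.getLast? = some 2 := by
    rw [List.getLast?_reverse, hm, List.range'_succ, List.head?_cons]
  have hOh : (List.range' 1 ((n + 1) / 2) 2).reverse.head? = some (1 + 2 * p) := by
    rw [List.head?_reverse, hp, List.range'_concat, List.getLast?_concat]
  have hOl : (List.range' 1 ((n + 1) / 2) 2).reverse.getLast? = some 1 := by
    rw [List.getLast?_reverse, hp, List.range'_succ, List.head?_cons]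
  rw [adjCount_cons, List.append_assoc, adjCount_append, adjCount_append,
    List.head?_append, List.head?_append, hEh, hEl, hOh, hOl,
    adjCount_reverse, adjCount_reverse, adjCount_range'2, adjCount_range'2,
    adjCount_single]
  simp only [Option.or, List.head?_cons, List.getLast?_singleton]
  rw [show jointO (some 0) (some (2 + 2 * m)) = 0 from adjp_zero (by omega) (by omega),
    show jointO (some 2) (some (1 + 2 * p)) = 0 from adjp_zero (by omega) (by omega),
    show jointO (some 1) (some (n + 1)) = 0 from adjp_zero (by omega) (by omega)]

/-- The worst-case number of cut-and-paste moves needed to sort a permutation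
of `[n]` is at least `⌈(n+1)/3⌉` (for `n ≥ 4`). -/
theorem lower_bound_third (n : ℕ) (hn : 4 ≤ n) :
    ∃ l : List ℕ, l.Perm (List.range' 1 n) ∧
      ∀ k : ℕ, MoveSeq k l (List.range' 1 n) → (n + 3) / 3 ≤ k := by
  rcases eq_or_lt_of_le hn with h4 | h5
  · refine ⟨[2, 4, 1, 3], ?_, ?_⟩
    · rw [← h4]; decide
    · intro k hk
      have hb := moveSeq_bound hk 0 (n + 1)
      rw [target_count] at hb
      have hc : adjCount (0 :: ([2, 4, 1, 3] ++ [n + 1])) = 0 := by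
        rw [← h4]; decide
      rw [hc] at hb
      omega
  · have h5 : 5 ≤ n := h5
    refine ⟨(List.range' 2 (n / 2) 2).reverse ++ (List.range' 1 ((n + 1) / 2) 2).reverse, ?_, ?_⟩
    · refine (List.Perm.append (List.reverse_perm _) (List.reverse_perm _)).trans ?_
      rw [← Multiset.coe_eq_coe, ← Multiset.coe_add]
      exact ms_split n
    · intro k hk
      have hb := moveSeq_bound hk 0 (n + 1)
      rw [target_count, adj_zero n h5] at hb
      omega
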